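/- Let $\eta \ge \eta_0$ where $\eta_0 = -\left(\frac{1}{2} + \operatorname{csch} 2\right)\operatorname{sech} 1$. Then for all $z$ in the open unit disc, $\operatorname{Re}\left(\eta \cosh\sqrt{z} + \sqrt{z}\,\operatorname{csch}(2\sqrt{z})\right) > -\frac{1}{2}$. -/

import Mathlib

/-!
Both functions are power series in `z` with nonnegative coefficients:
`cosh √z = ∑ zⁿ / (2n)!` and `sinh (2√z) / √z = ∑ 2²ⁿ⁺¹ zⁿ / (2n+1)!`, with coefficient sums
`cosh 1` and `sinh 2`. If such a series has sum `S` and its constant term `a₀` exceeds `S / 2`,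
then for `‖z‖ < 1` its value lies within `(S - a₀) ‖z‖ < S - a₀` of `a₀`, hence in the open disc
with diameter `[0, S]`. Thus `cosh √z` has positive real part and modulus `< cosh 1`, which gives
`η · re (cosh √z) > -(1/2 + csch 2)` for `η ≥ η₀`. And since inversion maps the disc with
diameter `[0, sinh 2]` into the half-plane `re > csch 2`, `√z csch 2√z = (sinh (2√z) / √z)⁻¹`
has real part `> csch 2`.
-/

open Metric

/-- `cosh √z` as a power series. -/
noncomputable def coshSqrt (z : ℂ) : ℂ := ∑' n : ℕ, z ^ n / (Nat.factorial (2 * n) : ℂ)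

/-- `√z · csch(2√z)`, with value `1/2` at `0`. -/
noncomputable def sqrtCsch (z : ℂ) : ℂ :=
  if z = 0 then 1 / 2 else z ^ (1/2 : ℂ) / Complex.sinh (2 * z ^ (1/2 : ℂ))

open scoped Nat

section Disc

variable {F : ℂ} {d : ℝ}

lemma pos_of_norm_sub_half_lt (h : ‖F - (d / 2 : ℝ)‖ < d / 2) : 0 < d := by
  linarith [norm_nonneg (F - (d / 2 : ℝ))]

lemma re_pos_of_norm_sub_half_lt (h : ‖F - (d / 2 : ℝ)‖ < d / 2) : 0 < F.re := by
  have hre := Complex.abs_re_le_norm (F - (d / 2 : ℝ))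
  rw [Complex.sub_re, Complex.ofReal_re] at hre
  linarith [neg_abs_le (F.re - d / 2)]

lemma norm_lt_of_norm_sub_half_lt (h : ‖F - (d / 2 : ℝ)‖ < d / 2) : ‖F‖ < d := by
  have hd := pos_of_norm_sub_half_lt h
  calc ‖F‖ ≤ ‖F - (d / 2 : ℝ)‖ + ‖((d / 2 : ℝ) : ℂ)‖ := norm_le_norm_sub_add _ _
    _ < d / 2 + d / 2 := by
      rw [Complex.norm_real, Real.norm_of_nonneg (by linarith)]; linarith
    _ = d := add_halves d

lemma inv_lt_re_inv_of_norm_sub_half_lt (h : ‖F - (d / 2 : ℝ)‖ < d / 2) : d⁻¹ < F⁻¹.re := by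
  have hsq : Complex.normSq F < d * F.re := by
    have h2 := pow_lt_pow_left₀ h (norm_nonneg _) two_ne_zero
    rw [← Complex.normSq_eq_norm_sq, Complex.normSq_apply] at h2
    simp only [Complex.sub_re, Complex.sub_im, Complex.ofReal_re, Complex.ofReal_im] at h2
    rw [Complex.normSq_apply]
    nlinarith
  have hF : F ≠ 0 := by
    rintro rfl
    simp at hsq
  rw [Complex.inv_re, lt_div_iff₀ (Complex.normSq_pos.mpr hF),
    inv_mul_lt_iff₀ (pos_of_norm_sub_half_lt h)]
  exact hsq

lemma neg_lt_mul_re_of_norm_sub_half_lt {m η : ℝ} (h : ‖F - (d / 2 : ℝ)‖ < d / 2) (hm : 0 < m)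
    (hη : -m / d ≤ η) : -m < η * F.re := by
  have hd := pos_of_norm_sub_half_lt h
  rcases le_or_gt 0 η with hη0 | hη0
  · nlinarith [re_pos_of_norm_sub_half_lt h]
  · calc -m ≤ η * d := by rwa [div_le_iff₀ hd] at hη
      _ < η * ‖F‖ := mul_lt_mul_of_neg_left (norm_lt_of_norm_sub_half_lt h) hη0
      _ ≤ η * F.re := mul_le_mul_of_nonpos_left (Complex.re_le_norm F) hη0.le

end Disc

section NonnegCoeff

variable {a : ℕ → ℝ} {S : ℝ} {z : ℂ}

lemma summable_mul_pow_of_norm_le_one (ha : ∀ n, 0 ≤ a n) (hS : Summable a) (hz : ‖z‖ ≤ 1) :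
    Summable fun n ↦ (a n : ℂ) * z ^ n := by
  refine .of_norm_bounded hS fun n ↦ ?_
  rw [norm_mul, norm_pow, Complex.norm_real, Real.norm_of_nonneg (ha n)]
  exact mul_le_of_le_one_right (ha n) (pow_le_one₀ (norm_nonneg z) hz)

lemma norm_tsum_mul_pow_sub_le (ha : ∀ n, 0 ≤ a n) (hS : HasSum a S) (hz : ‖z‖ ≤ 1) :
    ‖∑' n, (a n : ℂ) * z ^ n - a 0‖ ≤ (S - a 0) * ‖z‖ := by
  rw [(summable_mul_pow_of_norm_le_one ha hS.summable hz).tsum_eq_zero_add, pow_zero, mul_one,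
    add_sub_cancel_left]
  have htail : HasSum (fun n ↦ a (n + 1)) (S - a 0) := by
    simpa using (hasSum_nat_add_iff' 1).mpr hS
  refine tsum_of_norm_bounded (htail.mul_right ‖z‖) fun n ↦ ?_
  rw [norm_mul, norm_pow, Complex.norm_real, Real.norm_of_nonneg (ha _), pow_succ']
  exact mul_le_mul_of_nonneg_left
    (mul_le_of_le_one_right (norm_nonneg z) (pow_le_one₀ (norm_nonneg z) hz)) (ha _)

lemma norm_tsum_mul_pow_sub_half_lt (ha : ∀ n, 0 ≤ a n) (hS : HasSum a S) (h₀ : a 0 < S)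
    (h₁ : S < 2 * a 0) (hz : ‖z‖ < 1) :
    ‖∑' n, (a n : ℂ) * z ^ n - (S / 2 : ℝ)‖ < S / 2 := by
  have hdist := norm_tsum_mul_pow_sub_le ha hS hz.le
  calc ‖∑' n, (a n : ℂ) * z ^ n - (S / 2 : ℝ)‖
        ≤ ‖∑' n, (a n : ℂ) * z ^ n - a 0‖ + ‖(a 0 : ℂ) - (S / 2 : ℝ)‖ :=
          norm_sub_le_norm_sub_add_norm_sub _ _ _
    _ < (S - a 0) + (a 0 - S / 2) := by
          rw [← Complex.ofReal_sub, Complex.norm_real, Real.norm_of_nonneg (by linarith)]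
          nlinarith [norm_nonneg z]
    _ = S / 2 := by ring

end NonnegCoeff

lemma coshSqrt_eq_tsum (z : ℂ) : coshSqrt z = ∑' n, ((((2 * n)! : ℝ)⁻¹ : ℝ) : ℂ) * z ^ n := by
  simp only [coshSqrt, Complex.ofReal_inv, Complex.ofReal_natCast, div_eq_inv_mul]

lemma Real.hasSum_inv_factorial_two_mul : HasSum (fun n ↦ ((2 * n)! : ℝ)⁻¹) (Real.cosh 1) := by
  simpa using Real.hasSum_cosh 1

noncomputable def sinhTwoSqrtDivSqrt (z : ℂ) : ℂ :=
  ∑' n : ℕ, ((2 ^ (2 * n + 1) / (2 * n + 1)! : ℝ) : ℂ) * z ^ n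

lemma sinh_two_mul_eq_mul_sinhTwoSqrtDivSqrt {w z : ℂ} (hw : w ^ 2 = z) :
    Complex.sinh (2 * w) = w * sinhTwoSqrtDivSqrt z := by
  rw [sinhTwoSqrtDivSqrt, ← tsum_mul_left, ← (Complex.hasSum_sinh _).tsum_eq]
  congr 1 with n
  push_cast
  rw [← hw]
  ring

lemma sqrtCsch_eq_inv (z : ℂ) : sqrtCsch z = (sinhTwoSqrtDivSqrt z)⁻¹ := by
  rw [sqrtCsch]
  split_ifs with hz
  · subst hz
    rw [sinhTwoSqrtDivSqrt, tsum_eq_single 0 fun n hn ↦ by simp [hn]]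
    norm_num
  · have hw : (z ^ (1 / 2 : ℂ)) ^ 2 = z := by
      rw [one_div, ← Nat.cast_two]
      exact Complex.cpow_nat_inv_pow z two_ne_zero
    have hw0 : z ^ (1 / 2 : ℂ) ≠ 0 := fun h ↦ hz (by rw [← hw, h, zero_pow two_ne_zero])
    rw [sinh_two_mul_eq_mul_sinhTwoSqrtDivSqrt hw, div_mul_cancel_left₀ hw0]

lemma Real.cosh_one_lt_two : Real.cosh 1 < 2 := by
  have := Real.exp_lt_one_iff.mpr (by norm_num : (-1 : ℝ) < 0)
  rw [Real.cosh_eq]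
  linarith [Real.exp_one_lt_d9]

lemma Real.sinh_two_lt_four : Real.sinh 2 < 4 := by
  have h2 : Real.exp 2 = Real.exp 1 * Real.exp 1 := by rw [← Real.exp_add]; norm_num
  rw [Real.sinh_eq, h2]
  nlinarith [Real.exp_one_lt_d9, Real.exp_pos 1, Real.exp_pos (-2)]

theorem re_bound_eta (η : ℝ)
    (hη : -(1 / 2 + 1 / Real.sinh 2) / Real.cosh 1 ≤ η) :
    ∀ z ∈ ball (0:ℂ) 1, -(1 / 2) < ((η : ℂ) * coshSqrt z + sqrtCsch z).re := by
  intro z hz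
  rw [mem_ball_zero_iff] at hz
  have hcosh := norm_tsum_mul_pow_sub_half_lt (fun n ↦ by positivity)
    Real.hasSum_inv_factorial_two_mul (by simp) (by simpa using Real.cosh_one_lt_two) hz
  have hsinh := norm_tsum_mul_pow_sub_half_lt (fun n ↦ by positivity) (Real.hasSum_sinh 2)
    (by simp) (by norm_num [Real.sinh_two_lt_four]) hz
  rw [← coshSqrt_eq_tsum] at hcosh
  rw [← sinhTwoSqrtDivSqrt] at hsinh
  have hC := neg_lt_mul_re_of_norm_sub_half_lt hcosh (by positivity) hη
  have hH := inv_lt_re_inv_of_norm_sub_half_lt hsinh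
  rw [sqrtCsch_eq_inv, Complex.add_re, Complex.re_ofReal_mul]
  linarith [one_div (Real.sinh 2)]
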